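/- On ℝ⁶, let (ω, ψ⁺, ψ⁻) satisfy the SU(3) contraction identities. Let c, λ ∈ ℝ, X ∈ ℝ⁶, and let h₋ = ((h₋)_{ij}) be symmetric and anticommuting with ω (∑_p (h₋)_{ip}ω_{pj} = −∑_p ω_{ip}(h₋)_{pj}). Set h_{ij} = c δ_{ij} + λ ω_{ij} + ∑_u X_u ψ⁺_{uij} + (h₋)_{ij} and β = h ⋄ ψ⁺. Then β̂_{ia} := ∑_{j,k} β_{ijk}ψ⁺_{ajk} = 2(6c) δ_{ia} + 12 λ ω_{ia} + 4 ∑_u X_u ψ⁺_{uia} + 4 (h₋)_{ia} for all i, a (i.e. β̂ = 2 tr(h) g + 12 λ ω + 4 h₆ + 4 h₋). -/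

import Mathlib

open scoped BigOperators

/-- Kronecker delta on `Fin 6`. -/
noncomputable def kd6 (i j : Fin 6) : ℝ := if i = j then 1 else 0

/-!
Contracting `h ⋄ ψ⁺` with `ψ⁺` through the quadratic identity gives, for any 2-tensor `h` in
dimension `n`, `β̂ = (n - 4) h + 2 tr(h) g - 2 tr(hω) ω + 2 ωhω`. Both `X ⌟ ψ⁺` and `h₋`
anticommute with `ω` (for `X ⌟ ψ⁺` because `ψ⁺ ⌟ ω = -ψ⁻` is again skew), and since `ω² = -1`
every `A` anticommuting with `ω` satisfies `ωAω = A` and `tr A = tr (Aω) = 0`. Substituting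
`h = c g + λ ω + A` into the general formula gives the result.
-/

open Matrix

namespace SU3

variable {ι : Type*} [Fintype ι]

theorem trace_eq_zero_of_transpose_eq_neg {ω : Matrix ι ι ℝ} (hskew : ωᵀ = -ω) :
    ω.trace = 0 := by
  have h := congrArg trace hskew
  rw [trace_transpose, trace_neg] at h
  linarith

section Anticommutant

variable {ω A : Matrix ι ι ℝ}

def anticommutant (ω : Matrix ι ι ℝ) : Submodule ℝ (Matrix ι ι ℝ) :=
  LinearMap.ker (LinearMap.mulRight ℝ ω + LinearMap.mulLeft ℝ ω)

theorem mem_anticommutant : A ∈ anticommutant ω ↔ A * ω = -(ω * A) := by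
  simp [anticommutant, add_eq_zero_iff_eq_neg]

theorem mem_anticommutant_of_transpose (hω : ωᵀ = -ω) (hA : Aᵀ = -A)
    (hAω : (A * ω)ᵀ = -(A * ω)) : A ∈ anticommutant ω := by
  rw [transpose_mul, hω, hA, neg_mul_neg] at hAω
  rw [mem_anticommutant, hAω, neg_neg]

theorem trace_mul_eq_zero_of_mem_anticommutant (hA : A ∈ anticommutant ω) :
    (A * ω).trace = 0 := by
  have h : (A * ω).trace = -(A * ω).trace := by
    nth_rw 1 [mem_anticommutant.mp hA]
    rw [trace_neg, trace_mul_comm]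
  linarith

theorem of_slice_mem_anticommutant {ψ ψ' : ι → ι → ι → ℝ} (hω : ωᵀ = -ω)
    (hψ : ∀ i j k, ψ i j k = -ψ i k j) (hψ' : ∀ i j k, ψ' i j k = -ψ' i k j)
    (hψω : ∀ i j a, ∑ k, ψ i j k * ω a k = -ψ' i j a) (u : ι) :
    of (ψ u) ∈ anticommutant ω := by
  have hmul : of (ψ u) * ω = of (ψ' u) := by
    ext j a
    rw [mul_apply, of_apply, ← neg_neg (ψ' u j a), ← hψω, ← Finset.sum_neg_distrib]
    refine Finset.sum_congr rfl fun p _ => ?_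
    rw [of_apply, ← mul_neg, ← Matrix.neg_apply, ← hω, transpose_apply]
  refine mem_anticommutant_of_transpose hω (by ext j k; exact hψ u k j) ?_
  rw [hmul]
  ext j k
  exact hψ' u k j

variable [DecidableEq ι]

theorem mul_self_eq_neg_one (hskew : ωᵀ = -ω) (hunit : ω * ωᵀ = 1) : ω * ω = -1 := by
  rw [hskew, mul_neg] at hunit
  exact neg_eq_iff_eq_neg.mp hunit

theorem mul_mul_eq_self_of_mem_anticommutant (hω : ω * ω = -1) (hA : A ∈ anticommutant ω) :
    ω * A * ω = A := by
  rw [mul_assoc, mem_anticommutant.mp hA, mul_neg, ← mul_assoc, hω, neg_one_mul, neg_neg]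

theorem trace_eq_zero_of_mem_anticommutant (hω : ω * ω = -1) (hA : A ∈ anticommutant ω) :
    A.trace = 0 := by
  have h : A.trace = -A.trace := calc
    A.trace = (ω * A * ω).trace := by rw [mul_mul_eq_self_of_mem_anticommutant hω hA]
    _ = (ω * ω * A).trace := by rw [trace_mul_comm, ← mul_assoc]
    _ = -A.trace := by rw [hω, neg_one_mul, trace_neg]
  linarith

end Anticommutant

def diamond (h : Matrix ι ι ℝ) (ψ : ι → ι → ι → ℝ) (i j k : ι) : ℝ :=
  ∑ p, (h i p * ψ p j k + h j p * ψ i p k + h k p * ψ i j p)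

def hat (β ψ : ι → ι → ι → ℝ) : Matrix ι ι ℝ :=
  of fun i a => ∑ j, ∑ k, β i j k * ψ a j k

variable [DecidableEq ι]

def ContractionIdentity (ω : Matrix ι ι ℝ) (ψ : ι → ι → ι → ℝ) : Prop :=
  ∀ i j a b, ∑ k, ψ i j k * ψ a b k =
    (1 : Matrix ι ι ℝ) i a * (1 : Matrix ι ι ℝ) j b
      - (1 : Matrix ι ι ℝ) i b * (1 : Matrix ι ι ℝ) j a - ω i a * ω j b + ω i b * ω j a

namespace ContractionIdentity

variable {ω : Matrix ι ι ℝ} {ψ : ι → ι → ι → ℝ}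

theorem sum_sum_mul_self (hψψ : ContractionIdentity ω ψ) (hskew : ωᵀ = -ω) (hω : ω * ω = -1)
    (p a : ι) :
    ∑ j, ∑ k, ψ p j k * ψ a j k = ((Fintype.card ι : ℝ) - 2) * (1 : Matrix ι ι ℝ) p a := by
  have hdiag : ∀ j, ω j j = 0 := fun j => by
    have := congrFun (congrFun hskew j) j
    simp only [transpose_apply, Matrix.neg_apply] at this
    linarith
  have hsq : ∑ j, ω p j * ω j a = -(1 : Matrix ι ι ℝ) p a := by
    rw [← mul_apply, hω, Matrix.neg_apply]
  simp only [hψψ p, hdiag, mul_zero, sub_zero, Finset.sum_add_distrib, Finset.sum_sub_distrib, hsq]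
  simp only [one_apply_eq, mul_one, Finset.sum_const, Finset.card_univ, nsmul_eq_mul, ← mul_apply]
  ring

theorem sum_sum_mul_mixed (hψψ : ContractionIdentity ω ψ) (h : Matrix ι ι ℝ) (i a : ι) :
    ∑ j, ∑ p, h j p * ∑ k, ψ i p k * ψ a j k =
      h.trace * (1 : Matrix ι ι ℝ) i a - h i a - (h * ω).trace * ω i a + (ω * h * ω) i a := by
  simp only [hψψ i, mul_sub, mul_add, Finset.sum_add_distrib, Finset.sum_sub_distrib]
  congr 1; congr 1; congr 1
  · simp [one_apply, trace]
  · simp [one_apply]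
  · simp only [trace, diag, mul_apply, Finset.sum_mul]
    exact Finset.sum_congr rfl fun _ _ => Finset.sum_congr rfl fun _ _ => by ring
  · simp only [mul_apply, Finset.sum_mul]
    rw [Finset.sum_comm]
    exact Finset.sum_congr rfl fun _ _ => Finset.sum_congr rfl fun _ _ => by ring

theorem hat_diamond (hψψ : ContractionIdentity ω ψ) (hψ : ∀ i j k, ψ i j k = -ψ i k j)
    (hskew : ωᵀ = -ω) (hω : ω * ω = -1) (h : Matrix ι ι ℝ) :
    hat (diamond h ψ) ψ = ((Fintype.card ι : ℝ) - 4) • h + (2 * h.trace) • 1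
      - (2 * (h * ω).trace) • ω + (2 : ℝ) • (ω * h * ω) := by
  ext i a
  have hfirst : ∑ j, ∑ k, ∑ p, h i p * ψ p j k * ψ a j k =
      ((Fintype.card ι : ℝ) - 2) * h i a := by
    simp only [mul_assoc, ← Finset.mul_sum,
      Finset.sum_comm_cycle (f := fun j k p => h i p * (ψ p j k * ψ a j k))]
    simp [hψψ.sum_sum_mul_self hskew hω, one_apply, mul_comm]
  have hsecond : ∑ j, ∑ k, ∑ p, h j p * ψ i p k * ψ a j k =
      ∑ j, ∑ p, h j p * ∑ k, ψ i p k * ψ a j k := by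
    refine Finset.sum_congr rfl fun j _ => ?_
    rw [Finset.sum_comm]
    simp only [Finset.mul_sum, mul_assoc]
  have hthird : ∑ j, ∑ k, ∑ p, h k p * ψ i j p * ψ a j k =
      ∑ j, ∑ k, ∑ p, h j p * ψ i p k * ψ a j k := by
    rw [Finset.sum_comm]
    refine Finset.sum_congr rfl fun _ _ =>
      Finset.sum_congr rfl fun _ _ => Finset.sum_congr rfl fun _ _ => ?_
    rw [hψ i, hψ a]
    ring
  simp only [hat, diamond, of_apply, Finset.sum_mul, add_mul, Finset.sum_add_distrib, hfirst,
    hthird, hsecond, hψψ.sum_sum_mul_mixed]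
  simp only [Matrix.add_apply, Matrix.sub_apply, Matrix.smul_apply, one_apply, smul_eq_mul,
    mul_ite, mul_one, mul_zero]
  split_ifs <;> ring

theorem hat_diamond_of_mem_anticommutant (hψψ : ContractionIdentity ω ψ)
    (hψ : ∀ i j k, ψ i j k = -ψ i k j) (hskew : ωᵀ = -ω) (hω : ω * ω = -1) (c lam : ℝ)
    {A : Matrix ι ι ℝ} (hA : A ∈ anticommutant ω) :
    hat (diamond (c • 1 + lam • ω + A) ψ) ψ =
      ((3 * Fintype.card ι - 6 : ℝ) * c) • 1 + ((3 * Fintype.card ι - 6 : ℝ) * lam) • ω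
        + ((Fintype.card ι : ℝ) - 2) • A := by
  have htrace : (c • 1 + lam • ω + A).trace = Fintype.card ι * c := by
    simp [trace_eq_zero_of_transpose_eq_neg hskew, trace_eq_zero_of_mem_anticommutant hω hA,
      mul_comm]
  have htrace_mul : ((c • 1 + lam • ω + A) * ω).trace = -(Fintype.card ι * lam) := by
    simp [add_mul, hω, trace_eq_zero_of_transpose_eq_neg hskew,
      trace_mul_eq_zero_of_mem_anticommutant hA, mul_comm]
  have hconj : ω * (c • 1 + lam • ω + A) * ω = -c • 1 - lam • ω + A := by
    simp [mul_add, add_mul, mul_mul_eq_self_of_mem_anticommutant hω hA, hω, sub_eq_add_neg]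
  rw [hψψ.hat_diamond hψ hskew hω, htrace, htrace_mul, hconj]
  module

end ContractionIdentity

end SU3

open SU3

theorem kd6_eq_one : kd6 = (1 : Matrix (Fin 6) (Fin 6) ℝ) := by
  ext i j
  simp [kd6, one_apply]

theorem three_form_hat_formula_general
    (ω : Fin 6 → Fin 6 → ℝ)
    (ψp ψm : Fin 6 → Fin 6 → Fin 6 → ℝ)
    (hω_skew : ∀ i j, ω i j = - ω j i)
    (hω_unit : ∀ i j, ∑ k, ω i k * ω j k = kd6 i j)
    (hψp2 : ∀ i j k, ψp i j k = - ψp i k j)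
    (hψm2 : ∀ i j k, ψm i j k = - ψm i k j)
    (hψpω : ∀ i j a, ∑ k, ψp i j k * ω a k = - ψm i j a)
    (hψpψp : ∀ i j a b, ∑ k, ψp i j k * ψp a b k =
      kd6 i a * kd6 j b - kd6 i b * kd6 j a - ω i a * ω j b + ω i b * ω j a)
    (c lam : ℝ) (X : EuclideanSpace ℝ (Fin 6))
    (hm : Fin 6 → Fin 6 → ℝ)
    (hm_anticomm : ∀ i j, ∑ p, hm i p * ω p j = - ∑ p, ω i p * hm p j)
    (h : Fin 6 → Fin 6 → ℝ)
    (hh : ∀ i j, h i j = c * kd6 i j + lam * ω i j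
        + (∑ u, X u * ψp u i j) + hm i j)
    (β : Fin 6 → Fin 6 → Fin 6 → ℝ)
    (hβ : ∀ i j k, β i j k =
      ∑ p, (h i p * ψp p j k + h j p * ψp i p k + h k p * ψp i j p)) :
    ∀ i a, ∑ j, ∑ k, β i j k * ψp a j k =
      2 * (6 * c) * kd6 i a + 12 * lam * ω i a
        + 4 * (∑ u, X u * ψp u i a) + 4 * hm i a := by
  intro i a
  rw [kd6_eq_one] at hω_unit hψpψp hh ⊢
  have hskew : (of ω)ᵀ = -of ω := by ext i j; exact hω_skew j i
  have hω : of ω * of ω = -1 := mul_self_eq_neg_one hskew (by ext i j; exact hω_unit i j)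
  have hA : ∑ u, X u • of (ψp u) + of hm ∈ anticommutant (of ω) := by
    refine add_mem (Submodule.sum_mem _ fun u _ => Submodule.smul_mem _ _
      (of_slice_mem_anticommutant hskew hψp2 hψm2 hψpω u)) ?_
    rw [mem_anticommutant]; ext i j; exact hm_anticomm i j
  have hdecomp : of h = c • 1 + lam • of ω + (∑ u, X u • of (ψp u) + of hm) := by
    ext i j
    simp [hh, Matrix.sum_apply, add_assoc]
  have key := congrFun (congrFun (ContractionIdentity.hat_diamond_of_mem_anticommutant
    (ω := of ω) hψpψp hψp2 hskew hω c lam hA) i) a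
  rw [← hdecomp, show diamond (of h) ψp = β from funext₃ fun i j k => (hβ i j k).symm] at key
  simp only [hat, of_apply, Fintype.card_fin, Nat.cast_ofNat, smul_of, smul_add, Matrix.add_apply,
    Matrix.smul_apply, smul_eq_mul, Pi.smul_apply, Matrix.sum_apply] at key
  rw [key]
  ring

theorem three_form_hat_formula
    (ω : Fin 6 → Fin 6 → ℝ)
    (ψp ψm : Fin 6 → Fin 6 → Fin 6 → ℝ)
    (hω_skew : ∀ i j, ω i j = - ω j i)
    (hω_unit : ∀ i j, ∑ k, ω i k * ω j k = kd6 i j)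
    (hψp1 : ∀ i j k, ψp i j k = - ψp j i k)
    (hψp2 : ∀ i j k, ψp i j k = - ψp i k j)
    (hψm1 : ∀ i j k, ψm i j k = - ψm j i k)
    (hψm2 : ∀ i j k, ψm i j k = - ψm i k j)
    (hψpω : ∀ i j a, ∑ k, ψp i j k * ω a k = - ψm i j a)
    (hψpψp : ∀ i j a b, ∑ k, ψp i j k * ψp a b k =
      kd6 i a * kd6 j b - kd6 i b * kd6 j a - ω i a * ω j b + ω i b * ω j a)
    (c lam : ℝ) (X : EuclideanSpace ℝ (Fin 6))
    (hm : Fin 6 → Fin 6 → ℝ)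
    (hm_symm : ∀ i j, hm i j = hm j i)
    (hm_anticomm : ∀ i j, ∑ p, hm i p * ω p j = - ∑ p, ω i p * hm p j)
    (h : Fin 6 → Fin 6 → ℝ)
    (hh : ∀ i j, h i j = c * kd6 i j + lam * ω i j
        + (∑ u, X u * ψp u i j) + hm i j)
    (β : Fin 6 → Fin 6 → Fin 6 → ℝ)
    (hβ : ∀ i j k, β i j k =
      ∑ p, (h i p * ψp p j k + h j p * ψp i p k + h k p * ψp i j p)) :
    ∀ i a, ∑ j, ∑ k, β i j k * ψp a j k =
      2 * (6 * c) * kd6 i a + 12 * lam * ω i a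
        + 4 * (∑ u, X u * ψp u i a) + 4 * hm i a :=
  three_form_hat_formula_general ω ψp ψm hω_skew hω_unit hψp2 hψm2 hψpω hψpψp c lam X hm hm_anticomm
    h hh β hβ
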